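/- arXiv:2205.08633 — 3 statements merged into one kernel-verified Lean document; each statement's English description precedes it below -/
import Mathlib

section
/- Let (Ω, P) be a probability space, X : Ω → ℝ^d a random vector, Y : Ω → {−1, 1} a random variable, and f* a fixed measurable function with f*(X) a version of E[Y | X]. Let f : ℝ^d → ℝ be measurable with P(f(X) = 0) = 0, and suppose f*(X) ∈ L²(P). Then for every measurable g : ℝ^d → ℝ with g(X) ∈ L²(P) and sign g(X) = sign f(X) almost surely, P(sign f(X) ≠ Y) − P(sign f*(X) ≠ Y) ≤ (E[(g(X) − f*(X))²])^{1/2}. Consequently the excess classification risk of f is at most the infimum of (E[(g(X) − f*(X))²])^{1/2} over all such g. -/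
/-! With `η = E[Y | X]`, the misclassification indicator of a `±1`-valued guess `t` is
`(1 - t Y) / 2`, so the excess risk of `sgn f(X)` over `sgn f*(X)` is
`E[(sgn f* - sgn f)(X) Y] / 2`; the multiplier is `X`-measurable and bounded, so `Y` may be
replaced by `η = f*(X)`. Pointwise `(sgn v - sgn u) / 2 * v ≤ |u - v|`: the left side vanishes
unless `sgn u ≠ sgn v`, and then it is `|v| ≤ |u - v|`. Taking `u = g(X)`, which has the sign of
`f(X)`, bounds the excess risk by `E|g(X) - f*(X)|`, hence by the `L²` norm. -/

open MeasureTheory RealInnerProductSpace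

/-- sign: `1` if `z > 0`, `-1` if `z ≤ 0`. -/
noncomputable def sgn (z : ℝ) : ℝ := if 0 < z then 1 else -1

lemma measurable_sgn : Measurable sgn :=
  Measurable.ite measurableSet_Ioi measurable_const measurable_const

lemma abs_sgn (z : ℝ) : |sgn z| = 1 := by
  unfold sgn; split_ifs <;> norm_num

lemma sgn_sgn (z : ℝ) : sgn (sgn z) = sgn z := by
  unfold sgn; split_ifs <;> norm_num at *

lemma abs_sgn_sub_sgn_div_two_le_one (x y : ℝ) : |(sgn x - sgn y) / 2| ≤ 1 := by
  have := abs_sub (sgn x) (sgn y)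
  rw [abs_sgn, abs_sgn] at this
  rw [abs_div, abs_two]
  linarith

lemma ite_sgn_ne_eq {y : ℝ} (hy : y = 1 ∨ y = -1) (z : ℝ) :
    (if sgn z ≠ y then (1 : ℝ) else 0) = (1 - sgn z * y) / 2 := by
  unfold sgn; rcases hy with rfl | rfl <;> split_ifs <;> norm_num at *

lemma sgn_sub_sgn_div_two_mul_le_abs_sub (u v : ℝ) : (sgn v - sgn u) / 2 * v ≤ |u - v| := by
  have := le_abs_self (u - v)
  have := neg_abs_le (u - v)
  unfold sgn
  split_ifs <;> linarith

section Probability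

variable {Ω : Type*} {mΩ : MeasurableSpace Ω} {P : Measure Ω}

lemma integral_abs_le_integral_sq_rpow_half [IsProbabilityMeasure P] {u : Ω → ℝ}
    (hu : MemLp u 2 P) : ∫ ω, |u ω| ∂P ≤ (∫ ω, u ω ^ 2 ∂P) ^ (1 / 2 : ℝ) := by
  have hvar := ProbabilityTheory.variance_nonneg (fun ω => |u ω|) P
  rw [ProbabilityTheory.variance_eq_sub (X := fun ω => |u ω|) hu.abs] at hvar
  simp only [Pi.pow_apply, sq_abs] at hvar
  rw [← Real.sqrt_eq_rpow, Real.le_sqrt (integral_nonneg fun ω => abs_nonneg _)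
    (integral_nonneg fun ω => sq_nonneg _)]
  linarith

lemma integral_mul_condExp_of_bound {m : MeasurableSpace Ω} (hm : m ≤ mΩ) [IsFiniteMeasure P]
    {H Y : Ω → ℝ} (hH : StronglyMeasurable[m] H) (c : ℝ) (hHc : ∀ ω, |H ω| ≤ c)
    (hY : Integrable Y P) :
    ∫ ω, H ω * Y ω ∂P = ∫ ω, H ω * P[Y | m] ω ∂P := by
  rw [← integral_condExp hm]
  exact integral_congr_ae
    (condExp_stronglyMeasurable_mul_of_bound hm hH hY c (.of_forall hHc))

lemma integral_sgn_sub_sgn_mul_le_integral_abs_sub {a b c : Ω → ℝ} (ha : Integrable a P)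
    (hb : Measurable b) (hac : Integrable (fun ω => c ω - a ω) P)
    (hcb : ∀ᵐ ω ∂P, sgn (c ω) = sgn (b ω)) :
    ∫ ω, (sgn (a ω) - sgn (b ω)) / 2 * a ω ∂P ≤ ∫ ω, |c ω - a ω| ∂P := by
  have hH : AEStronglyMeasurable (fun ω => (sgn (a ω) - sgn (b ω)) / 2) P :=
    ((measurable_sgn.comp_aemeasurable ha.aemeasurable).sub
      (measurable_sgn.comp hb).aemeasurable).div_const 2 |>.aestronglyMeasurable
  refine integral_mono_ae
    (ha.bdd_mul hH (.of_forall fun ω => abs_sgn_sub_sgn_div_two_le_one _ _)) hac.abs ?_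
  filter_upwards [hcb] with ω h
  rw [← h]
  exact sgn_sub_sgn_div_two_mul_le_abs_sub _ _

variable {Y : Ω → ℝ} (hY : Measurable Y) (hYval : ∀ ω, Y ω = 1 ∨ Y ω = -1)
include hY hYval

lemma measureReal_sgn_ne_eq_integral {a : Ω → ℝ} (ha : Measurable a) :
    P.real {ω | sgn (a ω) ≠ Y ω} = ∫ ω, (1 - sgn (a ω) * Y ω) / 2 ∂P := by
  have hs : MeasurableSet {ω | sgn (a ω) ≠ Y ω} :=
    (measurableSet_eq_fun (measurable_sgn.comp ha) hY).compl
  rw [← integral_indicator_one hs]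
  congr 1 with ω
  simp only [Set.indicator_apply, Set.mem_ofPred_eq, Pi.one_apply, ite_sgn_ne_eq (hYval ω)]

variable [IsProbabilityMeasure P]

lemma integrable_sgn_mul {a : Ω → ℝ} (ha : Measurable a) :
    Integrable (fun ω => sgn (a ω) * Y ω) P := by
  refine .of_bound ((measurable_sgn.comp ha).mul hY).aestronglyMeasurable 1 (.of_forall ?_)
  intro ω
  rcases hYval ω with h | h <;> simp [h, abs_sgn]

lemma measureReal_sgn_ne_sub_measureReal_sgn_ne {m : MeasurableSpace Ω} (hm : m ≤ mΩ)
    {a b : Ω → ℝ} (ha : Measurable[m] a) (hb : Measurable[m] b) :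
    P.real {ω | sgn (b ω) ≠ Y ω} - P.real {ω | sgn (a ω) ≠ Y ω}
      = ∫ ω, (sgn (a ω) - sgn (b ω)) / 2 * P[Y | m] ω ∂P := by
  have hYint : Integrable Y P := .of_bound hY.aestronglyMeasurable 1
    (.of_forall fun ω => by rcases hYval ω with h | h <;> simp [h])
  have hmisclass {c : Ω → ℝ} (hc : Measurable[mΩ] c) :
      Integrable (fun ω => (1 - sgn (c ω) * Y ω) / 2) P :=
    ((integrable_const 1).sub (integrable_sgn_mul hY hYval hc)).div_const 2
  have hH : StronglyMeasurable[m] fun ω => (sgn (a ω) - sgn (b ω)) / 2 :=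
    (((measurable_sgn.comp ha).sub (measurable_sgn.comp hb)).div_const 2).stronglyMeasurable
  rw [measureReal_sgn_ne_eq_integral hY hYval (hb.mono hm le_rfl),
    measureReal_sgn_ne_eq_integral hY hYval (ha.mono hm le_rfl),
    ← integral_sub (hmisclass (hb.mono hm le_rfl)) (hmisclass (ha.mono hm le_rfl)),
    ← integral_mul_condExp_of_bound hm hH 1 (fun ω => abs_sgn_sub_sgn_div_two_le_one _ _) hYint]
  congr 1 with ω
  ring

lemma measureReal_sgn_ne_sub_measureReal_sgn_ne_le {m : MeasurableSpace Ω} (hm : m ≤ mΩ)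
    {a b c : Ω → ℝ} (ha : Measurable[m] a) (hb : Measurable[m] b) (hcond : a =ᵐ[P] P[Y | m])
    (haL2 : MemLp a 2 P) (hcL2 : MemLp c 2 P) (hcb : ∀ᵐ ω ∂P, sgn (c ω) = sgn (b ω)) :
    P.real {ω | sgn (b ω) ≠ Y ω} - P.real {ω | sgn (a ω) ≠ Y ω}
      ≤ (∫ ω, (c ω - a ω) ^ 2 ∂P) ^ (1 / 2 : ℝ) :=
  calc _ = ∫ ω, (sgn (a ω) - sgn (b ω)) / 2 * P[Y | m] ω ∂P :=
        measureReal_sgn_ne_sub_measureReal_sgn_ne hY hYval hm ha hb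
    _ = ∫ ω, (sgn (a ω) - sgn (b ω)) / 2 * a ω ∂P :=
        integral_congr_ae (by filter_upwards [hcond] with ω h; rw [h])
    _ ≤ ∫ ω, |c ω - a ω| ∂P :=
        integral_sgn_sub_sgn_mul_le_integral_abs_sub (haL2.integrable one_le_two)
          (hb.mono hm le_rfl) ((hcL2.sub haL2).integrable one_le_two) hcb
    _ ≤ _ := integral_abs_le_integral_sq_rpow_half (hcL2.sub haL2)

end Probability

theorem excess_risk_le_sq_loss_general {d : ℕ} {Ω : Type*} [MeasurableSpace Ω]
    (P : Measure Ω) [IsProbabilityMeasure P]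
    (X : Ω → EuclideanSpace ℝ (Fin d)) (hX : Measurable X)
    (Y : Ω → ℝ) (hY : Measurable Y) (hYval : ∀ ω, Y ω = 1 ∨ Y ω = -1)
    (fstar : EuclideanSpace ℝ (Fin d) → ℝ) (hfstar : Measurable fstar)
    (hcond : (fun ω => fstar (X ω)) =ᵐ[P] P[Y | MeasurableSpace.comap X inferInstance])
    (hfstarL2 : MemLp (fun ω => fstar (X ω)) 2 P)
    (f : EuclideanSpace ℝ (Fin d) → ℝ) (hf : Measurable f) :
    (∀ g : EuclideanSpace ℝ (Fin d) → ℝ, Measurable g →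
        MemLp (fun ω => g (X ω)) 2 P →
        (∀ᵐ ω ∂P, sgn (g (X ω)) = sgn (f (X ω))) →
        (P {ω | sgn (f (X ω)) ≠ Y ω}).toReal - (P {ω | sgn (fstar (X ω)) ≠ Y ω}).toReal
          ≤ (∫ ω, (g (X ω) - fstar (X ω)) ^ 2 ∂P) ^ (1 / 2 : ℝ)) ∧
    (P {ω | sgn (f (X ω)) ≠ Y ω}).toReal - (P {ω | sgn (fstar (X ω)) ≠ Y ω}).toReal
      ≤ sInf {r : ℝ | ∃ g : EuclideanSpace ℝ (Fin d) → ℝ, Measurable g ∧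
          MemLp (fun ω => g (X ω)) 2 P ∧
          (∀ᵐ ω ∂P, sgn (g (X ω)) = sgn (f (X ω))) ∧
          r = (∫ ω, (g (X ω) - fstar (X ω)) ^ 2 ∂P) ^ (1 / 2 : ℝ)} := by
  have hrisk (g : EuclideanSpace ℝ (Fin d) → ℝ) (hgL2 : MemLp (fun ω => g (X ω)) 2 P)
      (hsign : ∀ᵐ ω ∂P, sgn (g (X ω)) = sgn (f (X ω))) :=
    measureReal_sgn_ne_sub_measureReal_sgn_ne_le hY hYval hX.comap_le
      (hfstar.comp (comap_measurable X)) (hf.comp (comap_measurable X)) hcond hfstarL2 hgL2 hsign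
  have hsgn_f : MemLp (fun ω => sgn (f (X ω))) 2 P :=
    .of_bound (measurable_sgn.comp (hf.comp hX)).aestronglyMeasurable 1
      (.of_forall fun ω => (abs_sgn _).le)
  refine ⟨fun g _ hgL2 hsign => hrisk g hgL2 hsign,
    le_csInf ⟨_, sgn ∘ f, measurable_sgn.comp hf, hsgn_f, .of_forall fun ω => sgn_sgn _, rfl⟩ ?_⟩
  rintro r ⟨g, -, hgL2, hsign, rfl⟩
  exact hrisk g hgL2 hsign

/-- The excess classification risk of `f` is bounded by `‖g(X) − f*(X)‖_{L²}` for every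
square-integrable `g` with `sign g(X) = sign f(X)` a.s., and hence by the infimum of these
quantities. -/
theorem excess_risk_le_sq_loss {d : ℕ} {Ω : Type*} [MeasurableSpace Ω]
    (P : Measure Ω) [IsProbabilityMeasure P]
    (X : Ω → EuclideanSpace ℝ (Fin d)) (hX : Measurable X)
    (Y : Ω → ℝ) (hY : Measurable Y) (hYval : ∀ ω, Y ω = 1 ∨ Y ω = -1)
    (fstar : EuclideanSpace ℝ (Fin d) → ℝ) (hfstar : Measurable fstar)
    (hcond : (fun ω => fstar (X ω)) =ᵐ[P] P[Y | MeasurableSpace.comap X inferInstance])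
    (hfstarL2 : MemLp (fun ω => fstar (X ω)) 2 P)
    (f : EuclideanSpace ℝ (Fin d) → ℝ) (hf : Measurable f)
    (hf0 : P {ω | f (X ω) = 0} = 0) :
    (∀ g : EuclideanSpace ℝ (Fin d) → ℝ, Measurable g →
        MemLp (fun ω => g (X ω)) 2 P →
        (∀ᵐ ω ∂P, sgn (g (X ω)) = sgn (f (X ω))) →
        (P {ω | sgn (f (X ω)) ≠ Y ω}).toReal - (P {ω | sgn (fstar (X ω)) ≠ Y ω}).toReal
          ≤ (∫ ω, (g (X ω) - fstar (X ω)) ^ 2 ∂P) ^ (1 / 2 : ℝ)) ∧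
    (P {ω | sgn (f (X ω)) ≠ Y ω}).toReal - (P {ω | sgn (fstar (X ω)) ≠ Y ω}).toReal
      ≤ sInf {r : ℝ | ∃ g : EuclideanSpace ℝ (Fin d) → ℝ, Measurable g ∧
          MemLp (fun ω => g (X ω)) 2 P ∧
          (∀ᵐ ω ∂P, sgn (g (X ω)) = sgn (f (X ω))) ∧
          r = (∫ ω, (g (X ω) - fstar (X ω)) ^ 2 ∂P) ^ (1 / 2 : ℝ)} :=
  excess_risk_le_sq_loss_general P X hX Y hY hYval fstar hfstar hcond hfstarL2 f hf
end

section
/- Let (Ω, P) be a probability space, X : Ω → ℝ^d a random vector with E‖X‖₂² < ∞ whose second-moment matrix Σ = E[XXᵀ] is positive definite, and Y : Ω → ℝ square-integrable. Let β* ∈ ℝ^d be nonzero and satisfy E[(Y − ⟨β*, X⟩)⟨γ, X⟩] = 0 for every γ ∈ ℝ^d. Fix r > 0 and let β̃ minimize β ↦ E[(Y − ⟨β, X⟩)²] over S = { β : ‖β‖₂ ≤ r }. Then inf over t ∈ ℝ of ‖ t·β̃ − β*/‖β*‖₂ ‖₂ ≤ inf over a ≥ 0 of ‖ aΣ − I ‖_op,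 where ‖·‖_op is the operator norm of a matrix on (ℝ^d, ‖·‖₂). -/
/-!
The orthogonality of `Y - ⟪β*, X⟫` to the features turns the risk into
`E (Y - ⟪β*, X⟫)² + ⟪β* - β, Σ (β* - β)⟫`, so `β̃` minimizes this quadratic over the ball.
First-order optimality on the ball forces `Σ (β* - β̃) = λ β̃` with `λ ≥ 0`; positive
definiteness then gives `⟪β* - β̃, β̃⟫ ≥ 0`, hence `‖β* - β̃‖ ≤ ‖β*‖`. Finally
`(aΣ - I)(β* - β̃) = (1 + aλ) β̃ - β*`, so `t = (1 + aλ) / ‖β*‖` witnesses the bound.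
-/

open MeasureTheory RealInnerProductSpace Matrix Filter Topology

section Quadratic

variable {E : Type*} [NormedAddCommGroup E] [InnerProductSpace ℝ E]

lemma inner_apply_sub_nonpos_of_isMinOn {A : E →L[ℝ] E} (hA : (A : E →ₗ[ℝ] E).IsSymmetric)
    {s : Set E} (hs : Convex ℝ s) {b x : E} (hx : x ∈ s)
    (hmin : IsMinOn (fun β => ⟪b - β, A (b - β)⟫) s x) {β : E} (hβ : β ∈ s) :
    ⟪A (b - x), β - x⟫ ≤ 0 := by
  set w := b - x
  set u := β - x
  have hexpand (t : ℝ) : ⟪w - t • u, A (w - t • u)⟫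
      = ⟪w, A w⟫ + t * (t * ⟪u, A u⟫ - 2 * ⟪A w, u⟫) := by
    have hwu : ⟪w, A u⟫ = ⟪A w, u⟫ := (hA w u).symm
    have huw : ⟪u, A w⟫ = ⟪A w, u⟫ := real_inner_comm _ _
    simp only [map_sub, map_smul, inner_sub_left, inner_sub_right, real_inner_smul_left,
      real_inner_smul_right, hwu, huw]
    ring
  have hnonneg : ∀ t ∈ Set.Ioc (0 : ℝ) 1, 0 ≤ t * ⟪u, A u⟫ - 2 * ⟪A w, u⟫ := by
    rintro t ⟨ht0, ht1⟩
    have hmem : ⟪w, A w⟫ ≤ ⟪w - t • u, A (w - t • u)⟫ := by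
      rw [show w - t • u = b - (x + t • (β - x)) by simp only [w, u]; abel]
      exact hmin (hs.add_smul_sub_mem hx hβ ⟨ht0.le, ht1⟩)
    rw [hexpand] at hmem
    exact nonneg_of_mul_nonneg_right (by linarith) ht0
  have hlim : Tendsto (fun t : ℝ => t * ⟪u, A u⟫ - 2 * ⟪A w, u⟫) (𝓝[>] 0)
      (𝓝 (0 * ⟪u, A u⟫ - 2 * ⟪A w, u⟫)) :=
    ((continuous_id.mul continuous_const).sub continuous_const).continuousAt.tendsto.mono_left
      nhdsWithin_le_nhds
  have hlimit := ge_of_tendsto hlim (eventually_of_mem (Ioc_mem_nhdsGT one_pos) hnonneg)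
  linarith

lemma exists_nonneg_eq_smul_of_inner_sub_nonpos {r : ℝ} (hr : 0 < r) {x v : E} (hx : ‖x‖ ≤ r)
    (hv : ∀ β : E, ‖β‖ ≤ r → ⟪v, β - x⟫ ≤ 0) : ∃ c : ℝ, 0 ≤ c ∧ v = c • x := by
  rcases eq_or_ne v 0 with rfl | hv0
  · exact ⟨0, le_rfl, (zero_smul ℝ x).symm⟩
  have hvpos : 0 < ‖v‖ := norm_pos_iff.mpr hv0
  have hr_le : r * ‖v‖ ≤ ⟪v, x⟫ := by
    have h := hv ((r / ‖v‖) • v) (by rw [norm_smul, Real.norm_of_nonneg (by positivity),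
      div_mul_cancel₀ _ hvpos.ne'])
    rw [inner_sub_right, real_inner_smul_right, real_inner_self_eq_norm_sq] at h
    have : r / ‖v‖ * ‖v‖ ^ 2 = r * ‖v‖ := by field_simp
    linarith
  have hle : ⟪v, x⟫ ≤ ‖v‖ * ‖x‖ := real_inner_le_norm v x
  have hxr : ‖x‖ = r := le_antisymm hx (le_of_mul_le_mul_right (by linarith) hvpos)
  have hcs : ‖x‖ • v = ‖v‖ • x :=
    inner_eq_norm_mul_iff_real.mp (le_antisymm hle (by rw [hxr, mul_comm]; exact hr_le))
  refine ⟨‖v‖ / r, by positivity, ?_⟩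
  rw [hxr] at hcs
  rw [div_eq_inv_mul, ← smul_smul, ← hcs, smul_smul, inv_mul_cancel₀ hr.ne', one_smul]

lemma norm_sub_le_of_apply_sub_eq_smul {A : E →L[ℝ] E} (hA : ∀ w, w ≠ 0 → 0 < ⟪w, A w⟫)
    {b x : E} {c : ℝ} (hc : 0 ≤ c) (h : A (b - x) = c • x) : ‖b - x‖ ≤ ‖b‖ := by
  rcases eq_or_ne (b - x) 0 with hbx | hbx
  · rw [hbx, norm_zero]; exact norm_nonneg b
  have hpos : 0 < ⟪b - x, x⟫ := by
    have := hA _ hbx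
    rw [h, real_inner_smul_right] at this
    exact pos_of_mul_pos_right this hc
  have hsq : ‖b‖ ^ 2 = ‖b - x‖ ^ 2 + 2 * ⟪b - x, x⟫ + ‖x‖ ^ 2 := by
    rw [← norm_add_sq_real, sub_add_cancel]
  nlinarith [norm_nonneg b, norm_nonneg (b - x), sq_nonneg ‖x‖]

lemma iInf_norm_smul_sub_le_opNorm {A : E →L[ℝ] E} (hA : (A : E →ₗ[ℝ] E).IsSymmetric)
    (hApos : ∀ w, w ≠ 0 → 0 < ⟪w, A w⟫) {r : ℝ} (hr : 0 < r) {b x : E} (hb : b ≠ 0)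
    (hx : ‖x‖ ≤ r) (hmin : IsMinOn (fun β => ⟪b - β, A (b - β)⟫) (Metric.closedBall 0 r) x)
    (a : ℝ) : ⨅ t : ℝ, ‖t • x - ‖b‖⁻¹ • b‖ ≤ ‖a • A - 1‖ := by
  obtain ⟨c, hc, hAc⟩ := exists_nonneg_eq_smul_of_inner_sub_nonpos hr hx fun β hβ =>
    inner_apply_sub_nonpos_of_isMinOn hA (convex_closedBall 0 r)
      (mem_closedBall_zero_iff.mpr hx) hmin (mem_closedBall_zero_iff.mpr hβ)
  have hM : (a • A - 1) (b - x) = (1 + a * c) • x - b := by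
    simp only [_root_.sub_apply, _root_.smul_apply, one_apply_eq_self, hAc, smul_smul, add_smul,
      one_smul]
    abel
  have hbpos : 0 < ‖b‖ := norm_pos_iff.mpr hb
  have hbdd : BddBelow (Set.range fun t : ℝ => ‖t • x - ‖b‖⁻¹ • b‖) :=
    ⟨0, Set.forall_mem_range.mpr fun _ => norm_nonneg _⟩
  calc ⨅ t : ℝ, ‖t • x - ‖b‖⁻¹ • b‖
      ≤ ‖((1 + a * c) / ‖b‖) • x - ‖b‖⁻¹ • b‖ := ciInf_le hbdd _
    _ = ‖(a • A - 1) (b - x)‖ / ‖b‖ := by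
      rw [hM, div_eq_inv_mul, ← smul_smul, ← smul_sub, norm_smul, norm_inv, norm_norm,
        inv_mul_eq_div]
    _ ≤ ‖a • A - 1‖ * ‖b‖ / ‖b‖ := by
      gcongr
      exact ((a • A - 1).le_opNorm _).trans (mul_le_mul_of_nonneg_left
        (norm_sub_le_of_apply_sub_eq_smul hApos hc hAc) (norm_nonneg _))
    _ = ‖a • A - 1‖ := mul_div_cancel_right₀ _ hbpos.ne'

end Quadratic

section SecondMoment

variable {Ω : Type*} [MeasurableSpace Ω] {P : Measure Ω}

lemma integral_add_sq_of_integral_mul_eq_zero {f g : Ω → ℝ} (hf : MemLp f 2 P)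
    (hg : MemLp g 2 P) (hfg : ∫ ω, f ω * g ω ∂P = 0) :
    ∫ ω, (f ω + g ω) ^ 2 ∂P = ∫ ω, f ω ^ 2 ∂P + ∫ ω, g ω ^ 2 ∂P := by
  have hgg : Integrable (fun ω => g ω ^ 2) P := hg.integrable_sq
  have hfg' : Integrable (fun ω => 2 * (f ω * g ω)) P := (hf.integrable_mul hg).const_mul 2
  have hrest : Integrable (fun ω => g ω ^ 2 + 2 * (f ω * g ω)) P := hgg.add hfg'
  have hexpand (ω : Ω) : (f ω + g ω) ^ 2 = f ω ^ 2 + (g ω ^ 2 + 2 * (f ω * g ω)) := by ring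
  simp only [hexpand]
  rw [integral_add hf.integrable_sq hrest, integral_add hgg hfg', integral_const_mul, hfg,
    mul_zero, add_zero]

variable {ι : Type*} [Fintype ι] [DecidableEq ι]

lemma integral_inner_sq_eq_inner_toEuclideanCLM {X : Ω → EuclideanSpace ℝ ι} (hX : MemLp X 2 P)
    {C : Matrix ι ι ℝ} (hC : ∀ i j, C i j = ∫ ω, X ω i * X ω j ∂P) (v : EuclideanSpace ℝ ι) :
    ∫ ω, ⟪v, X ω⟫ ^ 2 ∂P = ⟪v, toEuclideanCLM (𝕜 := ℝ) C v⟫ := by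
  have hXi (i : ι) : MemLp (fun ω => X ω i) 2 P := by
    simpa [EuclideanSpace.inner_single_left] using
      hX.const_inner (𝕜 := ℝ) (EuclideanSpace.single i (1 : ℝ))
  have hint (i j : ι) : Integrable (fun ω => v i * v j * (X ω i * X ω j)) P :=
    ((hXi i).integrable_mul (hXi j)).const_mul _
  have hexpand (ω : Ω) : ⟪v, X ω⟫ ^ 2 = ∑ i, ∑ j, v i * v j * (X ω i * X ω j) := by
    simp only [PiLp.inner_apply, RCLike.inner_apply, conj_trivial, sq, Finset.sum_mul_sum]
    exact Finset.sum_congr rfl fun i _ => Finset.sum_congr rfl fun j _ => by ring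
  simp only [hexpand, inner_toEuclideanCLM, dotProduct, mulVec, Finset.mul_sum]
  rw [integral_finsetSum _ fun i _ => integrable_finsetSum _ fun j _ => hint i j]
  refine Finset.sum_congr rfl fun i _ => ?_
  rw [integral_finsetSum _ fun j _ => hint i j]
  refine Finset.sum_congr rfl fun j _ => ?_
  rw [integral_const_mul, ← hC]
  ring

lemma integral_sub_inner_sq_eq_add {X : Ω → EuclideanSpace ℝ ι} (hX : MemLp X 2 P) {Y : Ω → ℝ}
    (hY : MemLp Y 2 P) {C : Matrix ι ι ℝ} (hC : ∀ i j, C i j = ∫ ω, X ω i * X ω j ∂P)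
    {β₀ : EuclideanSpace ℝ ι}
    (hproj : ∀ γ : EuclideanSpace ℝ ι, ∫ ω, (Y ω - ⟪β₀, X ω⟫) * ⟪γ, X ω⟫ ∂P = 0)
    (β : EuclideanSpace ℝ ι) :
    ∫ ω, (Y ω - ⟪β, X ω⟫) ^ 2 ∂P
      = ∫ ω, (Y ω - ⟪β₀, X ω⟫) ^ 2 ∂P + ⟪β₀ - β, toEuclideanCLM (𝕜 := ℝ) C (β₀ - β)⟫ := by
  have hsplit (ω : Ω) : Y ω - ⟪β, X ω⟫ = (Y ω - ⟪β₀, X ω⟫) + ⟪β₀ - β, X ω⟫ := by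
    rw [inner_sub_left]; ring
  have hres : MemLp (fun ω => Y ω - ⟪β₀, X ω⟫) 2 P := hY.sub (hX.const_inner β₀)
  simp only [hsplit]
  rw [integral_add_sq_of_integral_mul_eq_zero hres (hX.const_inner _) (hproj _),
    integral_inner_sq_eq_inner_toEuclideanCLM hX hC]

end SecondMoment

lemma Matrix.PosDef.inner_toEuclideanCLM_pos {ι : Type*} [Fintype ι] [DecidableEq ι]
    {C : Matrix ι ι ℝ} (hC : C.PosDef) {w : EuclideanSpace ℝ ι} (hw : w ≠ 0) :
    0 < ⟪w, toEuclideanCLM (𝕜 := ℝ) C w⟫ := by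
  rw [inner_toEuclideanCLM]
  simpa using hC.dotProduct_mulVec_pos (x := WithLp.ofLp w) (by simpa using hw)

theorem sin_angle_le_opNorm_general {d : ℕ} {Ω : Type*} [MeasurableSpace Ω]
    (P : Measure Ω)
    (X : Ω → EuclideanSpace ℝ (Fin d)) (hX2 : MemLp X 2 P)
    (Y : Ω → ℝ) (hY2 : MemLp Y 2 P)
    (Cov : Matrix (Fin d) (Fin d) ℝ)
    (hCov : ∀ i j, Cov i j = ∫ ω, X ω i * X ω j ∂P) (hCovPD : Cov.PosDef)
    (βs : EuclideanSpace ℝ (Fin d)) (hβs : βs ≠ 0)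
    (hproj : ∀ γ : EuclideanSpace ℝ (Fin d), ∫ ω, (Y ω - ⟪βs, X ω⟫) * ⟪γ, X ω⟫ ∂P = 0)
    (r : ℝ) (hr : 0 < r)
    (βt : EuclideanSpace ℝ (Fin d)) (hβt : ‖βt‖ ≤ r)
    (hmin : ∀ β : EuclideanSpace ℝ (Fin d), ‖β‖ ≤ r →
      ∫ ω, (Y ω - ⟪βt, X ω⟫) ^ 2 ∂P ≤ ∫ ω, (Y ω - ⟪β, X ω⟫) ^ 2 ∂P) :
    (⨅ t : ℝ, ‖t • βt - ‖βs‖⁻¹ • βs‖)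
      ≤ ⨅ a : {a : ℝ // 0 ≤ a},
          ‖Matrix.toEuclideanCLM (𝕜 := ℝ)
            ((a : ℝ) • Cov - (1 : Matrix (Fin d) (Fin d) ℝ))‖ := by
  set A := toEuclideanCLM (𝕜 := ℝ) Cov
  have hsymm : (A : EuclideanSpace ℝ (Fin d) →ₗ[ℝ] _).IsSymmetric :=
    isSymmetric_toEuclideanLin_iff.mpr hCovPD.isHermitian
  have hQmin : IsMinOn (fun β => ⟪βs - β, A (βs - β)⟫) (Metric.closedBall 0 r) βt := by
    intro β hβ
    have h := hmin β (mem_closedBall_zero_iff.mp hβ)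
    rw [integral_sub_inner_sq_eq_add hX2 hY2 hCov hproj,
      integral_sub_inner_sq_eq_add hX2 hY2 hCov hproj β] at h
    exact le_of_add_le_add_left h
  refine le_ciInf fun a => ?_
  rw [map_sub, map_smul, map_one]
  exact iInf_norm_smul_sub_le_opNorm hsymm (fun w hw => hCovPD.inner_toEuclideanCLM_pos hw) hr
    hβs hβt hQmin a

/-- The constrained least-squares minimizer `β̃` over the ball of radius `r` satisfies
`sin θ(β̃, β*) ≤ inf_{a ≥ 0} ‖aΣ − I‖_op`, where the left-hand side is expressed as
`inf_{t ∈ ℝ} ‖t β̃ − β*/‖β*‖₂‖₂`. -/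
theorem sin_angle_le_opNorm {d : ℕ} {Ω : Type*} [MeasurableSpace Ω]
    (P : Measure Ω) [IsProbabilityMeasure P]
    (X : Ω → EuclideanSpace ℝ (Fin d)) (hX : Measurable X) (hX2 : MemLp X 2 P)
    (Y : Ω → ℝ) (hY : Measurable Y) (hY2 : MemLp Y 2 P)
    (Cov : Matrix (Fin d) (Fin d) ℝ)
    (hCov : ∀ i j, Cov i j = ∫ ω, X ω i * X ω j ∂P) (hCovPD : Cov.PosDef)
    (βs : EuclideanSpace ℝ (Fin d)) (hβs : βs ≠ 0)
    (hproj : ∀ γ : EuclideanSpace ℝ (Fin d), ∫ ω, (Y ω - ⟪βs, X ω⟫) * ⟪γ, X ω⟫ ∂P = 0)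
    (r : ℝ) (hr : 0 < r)
    (βt : EuclideanSpace ℝ (Fin d)) (hβt : ‖βt‖ ≤ r)
    (hmin : ∀ β : EuclideanSpace ℝ (Fin d), ‖β‖ ≤ r →
      ∫ ω, (Y ω - ⟪βt, X ω⟫) ^ 2 ∂P ≤ ∫ ω, (Y ω - ⟪β, X ω⟫) ^ 2 ∂P) :
    (⨅ t : ℝ, ‖t • βt - ‖βs‖⁻¹ • βs‖)
      ≤ ⨅ a : {a : ℝ // 0 ≤ a},
          ‖Matrix.toEuclideanCLM (𝕜 := ℝ)
            ((a : ℝ) • Cov - (1 : Matrix (Fin d) (Fin d) ℝ))‖ :=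
  sin_angle_le_opNorm_general P X hX2 Y hY2 Cov hCov hCovPD βs hβs hproj r hr βt hβt hmin
end

section
/- Let (Ω, P) be a probability space, X : Ω → ℝ^d a random vector whose law is rotation invariant, and Y : Ω → {−1, 1} a random variable with P(Y = 1 | X) = η(⟨β*, X⟩) almost surely, for some measurable η : ℝ → [0, 1] and some nonzero β* ∈ ℝ^d. Let φ : {−1, 1} × ℝ → ℝ be such that f ↦ φ(y, f) is convex for each y ∈ {−1, 1}, and suppose β ↦ E[φ(Y, ⟨β, X⟩)] is finite on the ball S = { β : ‖β‖₂ ≤ r } for some r > 0. If β̃ is the unique minimizer of β ↦ E[φ(Y, ⟨β, X⟩)] over S, then β̃ = c·β* for some c ∈ ℝ. -/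
/-!
Let `R` be the orthogonal reflection fixing the line `ℝ β*`. Conditioning on `X`, the risk of `β`
is `E[η ⟪β*, X⟫ φ(1, ⟪β, X⟫) + (1 - η ⟪β*, X⟫) φ(-1, ⟪β, X⟫)]`. As `R` is self-adjoint and fixes
`β*`, replacing `β` by `R β` in this expression amounts to replacing `X` by `R X`, which has the
same law. So `R β̃` lies in the ball and has the risk of `β̃`; uniqueness gives `R β̃ = β̃`, i.e.
`β̃ ∈ ℝ β*`.
-/

open MeasureTheory RealInnerProductSpace

theorem Submodule.inner_reflection_left {E : Type*} [NormedAddCommGroup E] [InnerProductSpace ℝ E]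
    (K : Submodule ℝ E) [K.HasOrthogonalProjection] (u v : E) :
    ⟪K.reflection u, v⟫ = ⟪u, K.reflection v⟫ := by
  conv_lhs => rw [← K.reflection_reflection v]
  exact K.reflection.inner_map_map u (K.reflection v)

theorem integral_comp_inner_reflection_span_singleton {Ω E : Type*} [MeasurableSpace Ω]
    {P : Measure Ω} [NormedAddCommGroup E] [InnerProductSpace ℝ E] [MeasurableSpace E]
    [BorelSpace E] {X : Ω → E} (hX : Measurable X) {v : E}
    (hinv : P.map (fun ω => (ℝ ∙ v).reflection (X ω)) = P.map X)
    {G : ℝ × ℝ → ℝ} (hG : Measurable G) (β : E) :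
    ∫ ω, G (⟪v, X ω⟫, ⟪(ℝ ∙ v).reflection β, X ω⟫) ∂P = ∫ ω, G (⟪v, X ω⟫, ⟪β, X ω⟫) ∂P := by
  set R := (ℝ ∙ v).reflection
  have hRv : R v = v :=
    Submodule.reflection_mem_subspace_eq_self (Submodule.mem_span_singleton_self v)
  have hlaw : ProbabilityTheory.IdentDistrib (fun ω => R (X ω)) X P P :=
    ⟨(R.continuous.measurable.comp hX).aemeasurable, hX.aemeasurable, hinv⟩
  have hu : Measurable fun x : E => G (⟪v, x⟫, ⟪β, x⟫) := by fun_prop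
  calc ∫ ω, G (⟪v, X ω⟫, ⟪R β, X ω⟫) ∂P
      = ∫ ω, G (⟪v, R (X ω)⟫, ⟪β, R (X ω)⟫) ∂P := by
        simp only [← Submodule.inner_reflection_left, R, hRv]
    _ = ∫ ω, G (⟪v, X ω⟫, ⟪β, X ω⟫) ∂P := (hlaw.comp hu).integral_eq

theorem condExp_indicator_add_indicator_compl_ae_eq {Ω : Type*} {m mΩ : MeasurableSpace Ω}
    {P : Measure Ω} [IsFiniteMeasure P] (hm : m ≤ mΩ) {s : Set Ω} (hs : MeasurableSet s)
    {f g p : Ω → ℝ} (hf : StronglyMeasurable[m] f) (hg : StronglyMeasurable[m] g)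
    (hint : Integrable (s.indicator f + sᶜ.indicator g) P)
    (hp : P[s.indicator (fun _ => 1) | m] =ᵐ[P] p) :
    P[s.indicator f + sᶜ.indicator g | m] =ᵐ[P] fun ω => p ω * f ω + (1 - p ω) * g ω := by
  set q : Ω → ℝ := s.indicator fun _ => 1
  have hq : Integrable q P := (integrable_const 1).indicator hs
  have hfq : s.indicator f = f * q := by
    ext ω; by_cases h : ω ∈ s <;> simp [q, h]
  have hgq : sᶜ.indicator g = g * (1 - q) := by
    ext ω; by_cases h : ω ∈ s <;> simp [q, h]
  have hint₁ : Integrable (f * q) P := by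
    have h : s.indicator (s.indicator f + sᶜ.indicator g) = f * q := by
      ext ω; by_cases h : ω ∈ s <;> simp [q, h]
    exact h ▸ hint.indicator hs
  have hint₂ : Integrable (g * (1 - q)) P := by
    have h : sᶜ.indicator (s.indicator f + sᶜ.indicator g) = g * (1 - q) := by
      ext ω; by_cases h : ω ∈ s <;> simp [q, h]
    exact h ▸ hint.indicator hs.compl
  have hcompl : P[1 - q | m] =ᵐ[P] 1 - p := by
    have h₁ : P[(1 : Ω → ℝ) | m] = 1 := condExp_const hm (1 : ℝ)
    filter_upwards [condExp_sub (f := (1 : Ω → ℝ)) (integrable_const 1) hq m, hp] with ω hω hpω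
    simp [hω, h₁, hpω]
  rw [hfq, hgq]
  filter_upwards [condExp_add hint₁ hint₂ m,
    condExp_mul_of_stronglyMeasurable_left hf hint₁ hq,
    condExp_mul_of_stronglyMeasurable_left hg hint₂ ((integrable_const 1).sub hq),
    hp, hcompl] with ω h h₁ h₂ hpω hcω
  simp only [h, Pi.add_apply, h₁, h₂, Pi.mul_apply, hpω, hcω, Pi.sub_apply, Pi.one_apply]
  ring

theorem integral_loss_eq_integral_condProb_mix {Ω : Type*} {m mΩ : MeasurableSpace Ω}
    {P : Measure Ω} [IsFiniteMeasure P] (hm : m ≤ mΩ) {Y : Ω → ℝ} (hY : Measurable Y)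
    (hYval : ∀ ω, Y ω = 1 ∨ Y ω = -1) {ℓ : ℝ → Ω → ℝ} (hℓ₁ : StronglyMeasurable[m] (ℓ 1))
    (hℓ₂ : StronglyMeasurable[m] (ℓ (-1))) (hint : Integrable (fun ω => ℓ (Y ω) ω) P)
    {p : Ω → ℝ} (hp : P[{ω | Y ω = 1}.indicator (fun _ => 1) | m] =ᵐ[P] p) :
    ∫ ω, ℓ (Y ω) ω ∂P = ∫ ω, p ω * ℓ 1 ω + (1 - p ω) * ℓ (-1) ω ∂P := by
  set s := {ω | Y ω = 1}
  have hsplit : (fun ω => ℓ (Y ω) ω) = s.indicator (ℓ 1) + sᶜ.indicator (ℓ (-1)) := by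
    ext ω; rcases hYval ω with h | h <;> norm_num [s, Set.indicator_apply, h]
  rw [hsplit, ← integral_condExp hm]
  exact integral_congr_ae (condExp_indicator_add_indicator_compl_ae_eq hm
    (hY (measurableSet_singleton 1)) hℓ₁ hℓ₂ (hsplit ▸ hint) hp)

theorem constrained_min_is_multiple_general {d : ℕ} {Ω : Type*} [MeasurableSpace Ω]
    (P : Measure Ω) [IsProbabilityMeasure P]
    (X : Ω → EuclideanSpace ℝ (Fin d)) (hX : Measurable X)
    (hrot : ∀ R : EuclideanSpace ℝ (Fin d) ≃ₗᵢ[ℝ] EuclideanSpace ℝ (Fin d),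
      Measure.map (fun ω => R (X ω)) P = Measure.map X P)
    (Y : Ω → ℝ) (hY : Measurable Y) (hYval : ∀ ω, Y ω = 1 ∨ Y ω = -1)
    (η : ℝ → ℝ) (hη : Measurable η)
    (βs : EuclideanSpace ℝ (Fin d))
    (hcond : P[Set.indicator {ω | Y ω = 1} (fun _ => (1 : ℝ))
        | MeasurableSpace.comap X inferInstance] =ᵐ[P] fun ω => η ⟪βs, X ω⟫)
    (φ : ℝ → ℝ → ℝ)
    (hφ1 : ConvexOn ℝ Set.univ (φ 1)) (hφm1 : ConvexOn ℝ Set.univ (φ (-1)))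
    (r : ℝ)
    (hint : ∀ β : EuclideanSpace ℝ (Fin d), ‖β‖ ≤ r →
      Integrable (fun ω => φ (Y ω) ⟪β, X ω⟫) P)
    (βt : EuclideanSpace ℝ (Fin d)) (hβt : ‖βt‖ ≤ r)
    (huniq : ∀ β : EuclideanSpace ℝ (Fin d), ‖β‖ ≤ r →
      (∫ ω, φ (Y ω) ⟪β, X ω⟫ ∂P = ∫ ω, φ (Y ω) ⟪βt, X ω⟫ ∂P) → β = βt) :
    ∃ c : ℝ, βt = c • βs := by
  have hφ1c : Continuous (φ 1) := continuousOn_univ.mp (hφ1.continuousOn isOpen_univ)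
  have hφm1c : Continuous (φ (-1)) := continuousOn_univ.mp (hφm1.continuousOn isOpen_univ)
  set G : ℝ × ℝ → ℝ := fun z => η z.1 * φ 1 z.2 + (1 - η z.1) * φ (-1) z.2
  have hG : Measurable G := by fun_prop
  have hrisk : ∀ β : EuclideanSpace ℝ (Fin d), ‖β‖ ≤ r →
      ∫ ω, φ (Y ω) ⟪β, X ω⟫ ∂P = ∫ ω, G (⟪βs, X ω⟫, ⟪β, X ω⟫) ∂P := by
    intro β hβ
    have hmeas : ∀ y, Continuous (φ y) →
        StronglyMeasurable[MeasurableSpace.comap X inferInstance] fun ω => φ y ⟪β, X ω⟫ :=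
      fun y hc => (hc.measurable.comp
        ((measurable_const.inner measurable_id).comp (comap_measurable X))).stronglyMeasurable
    exact integral_loss_eq_integral_condProb_mix (ℓ := fun y ω => φ y ⟪β, X ω⟫) hX.comap_le
      hY hYval (hmeas 1 hφ1c) (hmeas (-1) hφm1c) (hint β hβ) hcond
  set R := (ℝ ∙ βs).reflection
  have hRβt : ‖R βt‖ ≤ r := by rwa [LinearIsometryEquiv.norm_map]
  have hfix : R βt = βt := huniq _ hRβt <| by
    rw [hrisk _ hRβt, hrisk _ hβt]
    exact integral_comp_inner_reflection_span_singleton hX (hrot R) hG βt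
  obtain ⟨c, hc⟩ := Submodule.mem_span_singleton.mp ((Submodule.reflection_eq_self_iff βt).mp hfix)
  exact ⟨c, hc.symm⟩

/-- Under rotation invariance of the law of `X`, a single-index model
`P(Y = 1 | X) = η(⟨β*, X⟩)`, and convexity of the surrogate loss, the unique constrained
minimizer of the surrogate risk over the ball of radius `r` is a multiple of `β*`. -/
theorem constrained_min_is_multiple {d : ℕ} {Ω : Type*} [MeasurableSpace Ω]
    (P : Measure Ω) [IsProbabilityMeasure P]
    (X : Ω → EuclideanSpace ℝ (Fin d)) (hX : Measurable X)
    (hrot : ∀ R : EuclideanSpace ℝ (Fin d) ≃ₗᵢ[ℝ] EuclideanSpace ℝ (Fin d),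
      Measure.map (fun ω => R (X ω)) P = Measure.map X P)
    (Y : Ω → ℝ) (hY : Measurable Y) (hYval : ∀ ω, Y ω = 1 ∨ Y ω = -1)
    (η : ℝ → ℝ) (hη : Measurable η) (hη01 : ∀ z, η z ∈ Set.Icc (0 : ℝ) 1)
    (βs : EuclideanSpace ℝ (Fin d)) (hβs : βs ≠ 0)
    (hcond : P[Set.indicator {ω | Y ω = 1} (fun _ => (1 : ℝ))
        | MeasurableSpace.comap X inferInstance] =ᵐ[P] fun ω => η ⟪βs, X ω⟫)
    (φ : ℝ → ℝ → ℝ)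
    (hφ1 : ConvexOn ℝ Set.univ (φ 1)) (hφm1 : ConvexOn ℝ Set.univ (φ (-1)))
    (r : ℝ) (hr : 0 < r)
    (hint : ∀ β : EuclideanSpace ℝ (Fin d), ‖β‖ ≤ r →
      Integrable (fun ω => φ (Y ω) ⟪β, X ω⟫) P)
    (βt : EuclideanSpace ℝ (Fin d)) (hβt : ‖βt‖ ≤ r)
    (hmin : ∀ β : EuclideanSpace ℝ (Fin d), ‖β‖ ≤ r →
      ∫ ω, φ (Y ω) ⟪βt, X ω⟫ ∂P ≤ ∫ ω, φ (Y ω) ⟪β, X ω⟫ ∂P)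
    (huniq : ∀ β : EuclideanSpace ℝ (Fin d), ‖β‖ ≤ r →
      (∫ ω, φ (Y ω) ⟪β, X ω⟫ ∂P = ∫ ω, φ (Y ω) ⟪βt, X ω⟫ ∂P) → β = βt) :
    ∃ c : ℝ, βt = c • βs :=
  constrained_min_is_multiple_general P X hX hrot Y hY hYval η hη βs hcond φ hφ1 hφm1 r hint βt hβt
    huniq
end
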